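/- There exists a constant c > 0 such that for every ζ ∈ H¹(ℝ) ∩ L²(ℝ) with ∫_ℝ ζ(x) w'(x) dx = 0, one has ∫_ℝ |ζ'(x)|² − f'(w(x)) |ζ(x)|² dx ≥ c ∫_ℝ |ζ(x)|² dx. -/

import Mathlib

open MeasureTheory Real Filter Set Topology

noncomputable section

/-- The heteroclinic profile `w(s) = tanh(s/√2)`. -/
def w (s : ℝ) : ℝ := Real.tanh (s / Real.sqrt 2)

/-- The Allen-Cahn nonlinearity `f(u) = (1-u²)u`. -/
def f (u : ℝ) : ℝ := (1 - u ^ 2) * u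

/-- `f'(u) = 1 - 3u²`. -/
def fp (u : ℝ) : ℝ := 1 - 3 * u ^ 2

/-- The interaction constant β. -/
def β : ℝ :=
  6 * (∫ x : ℝ, Real.exp (Real.sqrt 2 * x) * (1 - w x ^ 2) * deriv w x) /
    ∫ x : ℝ, deriv w x ^ 2

/-- The constants `b_l`. -/
def bcoef (k l : ℕ) : ℝ :=
  -(1 / Real.sqrt 2) * Real.log (((k : ℝ) - (l : ℝ)) * (l : ℝ) / (2 * β))

/-- The constants `γ_j`, determined by `γ_{k-j+1} = -γ_j = (1/2)∑_{i=j}^{k-j} b_i` for `j ≤ k/2`. -/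
def γcoef (k j : ℕ) : ℝ :=
  if j ≤ k / 2 then -(1 / 2) * ∑ i ∈ Finset.Icc j (k - j), bcoef k i
  else (1 / 2) * ∑ i ∈ Finset.Icc (k - j + 1) (j - 1), bcoef k i

/-- `ρ_j⁰(t) = √(-2(n-1)t) + (j-(k+1)/2) η(t) + γ_j`. -/
def ρ0 (n k : ℕ) (η : ℝ → ℝ) (j : ℕ) (t : ℝ) : ℝ :=
  Real.sqrt (-2 * ((n : ℝ) - 1) * t) + ((j : ℝ) - ((k : ℝ) + 1) / 2) * η t + γcoef k j

/-- `ρ_j⁰` extended by the convention `ρ₀⁰ = ρ₁⁰ - η`. -/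
def ρ0e (n k : ℕ) (η : ℝ → ℝ) (j : ℕ) (t : ℝ) : ℝ :=
  if j = 0 then ρ0 n k η 1 t - η t else ρ0 n k η j t

/-- `ρ_j = ρ_j⁰ + h_j`. -/
def ρf (n k : ℕ) (η : ℝ → ℝ) (h : ℕ → ℝ → ℝ) (j : ℕ) (t : ℝ) : ℝ :=
  ρ0 n k η j t + h j t

/-- `z(t,r) = ∑_{j=1}^k (-1)^{j+1} w(r - ρ_j(t)) - 1`. -/
def zf (n k : ℕ) (η : ℝ → ℝ) (h : ℕ → ℝ → ℝ) (t r : ℝ) : ℝ :=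
  (∑ j ∈ Finset.Icc 1 k, (-1 : ℝ) ^ (j + 1) * w (r - ρf n k η h j t)) - 1

/-- The error term `E`. -/
def Ef (n k : ℕ) (η : ℝ → ℝ) (h : ℕ → ℝ → ℝ) (t r : ℝ) : ℝ :=
  (∑ j ∈ Finset.Icc 1 k, (-1 : ℝ) ^ (j + 1) *
      (deriv w (r - ρf n k η h j t) * deriv (ρf n k η h j) t +
        ((n : ℝ) - 1) / r * deriv w (r - ρf n k η h j t))) +
    f (zf n k η h t r) -
    ∑ j ∈ Finset.Icc 1 k, (-1 : ℝ) ^ (j + 1) * f (w (r - ρf n k η h j t))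

/-- The nonlinear term `N(ψ) = f(z+ψ) - f(z) - f'(z)ψ`. -/
def Nf (n k : ℕ) (η : ℝ → ℝ) (h : ℕ → ℝ → ℝ) (ψ : ℝ → ℝ → ℝ) (t r : ℝ) : ℝ :=
  f (zf n k η h t r + ψ t r) - f (zf n k η h t r) - fp (zf n k η h t r) * ψ t r

/-- The piecewise description of the weight `Φ`. -/
def PhiSpec (n k : ℕ) (σ : ℝ) (η : ℝ → ℝ) (Φ : ℝ → ℝ → ℝ) : Prop :=
  (∀ t r : ℝ, r ≤ (ρ0e n k η 0 t + ρ0e n k η 1 t) / 2 →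
      Φ t r = Real.exp (σ * (r - ρ0 n k η 1 t))) ∧
    (∀ t r : ℝ, (ρ0e n k η 0 t + ρ0e n k η 1 t) / 2 ≤ r →
      r ≤ (ρ0 n k η 1 t + ρ0 n k η 2 t) / 2 →
      Φ t r = Real.exp (σ * (r - ρ0 n k η 2 t))) ∧
    (∀ j : ℕ, 2 ≤ j → j < k → ∀ t r : ℝ,
      (ρ0 n k η j t + ρ0 n k η (j - 1) t) / 2 ≤ r →
      r ≤ (ρ0 n k η j t + ρ0 n k η (j + 1) t) / 2 →
      Φ t r =
        Real.exp (σ * (ρ0 n k η (j - 1) t - r)) + Real.exp (σ * (r - ρ0 n k η (j + 1) t))) ∧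
    ∀ t r : ℝ, (ρ0 n k η k t + ρ0 n k η (k - 1) t) / 2 ≤ r →
      Φ t r = Real.exp (σ * (ρ0 n k η (k - 1) t - r))

/-- The class of admissible perturbations `h` on `(-∞, τ]`:
`h ∈ C¹` and `sup |h| + sup (|t|/log|t|)|h'| < 1`. -/
def hSpec (k : ℕ) (τ : ℝ) (h h' : ℕ → ℝ → ℝ) : Prop :=
  (∀ j ∈ Finset.Icc 1 k, ∀ t ≤ τ, HasDerivAt (h j) (h' j t) t) ∧
    (∀ j ∈ Finset.Icc 1 k, ContinuousOn (h' j) (Set.Iic τ)) ∧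
    ∃ a b : ℝ, a + b < 1 ∧
      (∀ t ≤ τ, Real.sqrt (∑ j ∈ Finset.Icc 1 k, h j t ^ 2) ≤ a) ∧
      ∀ t ≤ τ, |t| / Real.log |t| * Real.sqrt (∑ j ∈ Finset.Icc 1 k, h' j t ^ 2) ≤ b

/-- The weighted sup norm `‖u‖_{C_Φ(S)} = ‖u/Φ‖_{L^∞(S)}`. -/
def cnorm (Φ u : ℝ → ℝ → ℝ) (S : Set (ℝ × ℝ)) : ℝ :=
  sSup ((fun p : ℝ × ℝ => |u p.1 p.2| / Φ p.1 p.2) '' S)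

/-- Membership in the space `C_Φ(S)`: continuity and finiteness of the norm. -/
def memC (Φ u : ℝ → ℝ → ℝ) (S : Set (ℝ × ℝ)) : Prop :=
  ContinuousOn (fun p : ℝ × ℝ => u p.1 p.2) S ∧
    BddAbove ((fun p : ℝ × ℝ => |u p.1 p.2| / Φ p.1 p.2) '' S)

/-- The parabolic region `(s,t) × (0,∞)`. -/
def QS (s t : ℝ) : Set (ℝ × ℝ) := Set.Ioo s t ×ˢ Set.Ioi 0

/-- The parabolic region `(-∞,t) × (0,∞)`. -/
def QI (t : ℝ) : Set (ℝ × ℝ) := Set.Iio t ×ˢ Set.Ioi 0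

/-- The norm of the space Λ. -/
def lamNorm (k : ℕ) (T₀ : ℝ) (h h' : ℕ → ℝ → ℝ) : ℝ :=
  sSup ((fun t => Real.sqrt (∑ j ∈ Finset.Icc 1 k, h j t ^ 2)) '' Set.Iic (-T₀)) +
    sSup ((fun t => |t| / Real.log |t| * Real.sqrt (∑ j ∈ Finset.Icc 1 k, h' j t ^ 2)) ''
      Set.Iic (-T₀))

/-- Membership in the set Λ. -/
def lamMem (k : ℕ) (T₀ : ℝ) (h h' : ℕ → ℝ → ℝ) : Prop :=
  (∀ j ∈ Finset.Icc 1 k, ∀ t ≤ -T₀, HasDerivAt (h j) (h' j t) t) ∧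
    (∀ j ∈ Finset.Icc 1 k, ContinuousOn (h' j) (Set.Iic (-T₀))) ∧
    BddAbove ((fun t => Real.sqrt (∑ j ∈ Finset.Icc 1 k, h j t ^ 2)) '' Set.Iic (-T₀)) ∧
    BddAbove ((fun t => |t| / Real.log |t| * Real.sqrt (∑ j ∈ Finset.Icc 1 k, h' j t ^ 2)) ''
      Set.Iic (-T₀)) ∧
    lamNorm k T₀ h h' < 1

/-- The ODE `η' + η/(2t) + e^{-√2 η} = 0` on `(-∞,-1]`, `η(-1) = 0`. -/
def etaODE (η : ℝ → ℝ) : Prop :=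
  η (-1) = 0 ∧
    ∀ t ≤ (-1 : ℝ), HasDerivAt η (-(η t / (2 * t)) - Real.exp (-(Real.sqrt 2) * η t)) t

/-- Partial derivative in time. -/
def dT (ψ : ℝ → ℝ → ℝ) (t r : ℝ) : ℝ := deriv (fun τ => ψ τ r) t

/-- Partial derivative in the radial variable. -/
def dR (ψ : ℝ → ℝ → ℝ) (t r : ℝ) : ℝ := deriv (ψ t) r

/-- Second partial derivative in the radial variable. -/
def dRR (ψ : ℝ → ℝ → ℝ) (t r : ℝ) : ℝ := deriv (deriv (ψ t)) r

/-!
`L = -d²/dx² - f'(w)` factorises as `L = A*A` with `A = d/dx + √2 w`, whose kernel is spanned by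
`w'`, while `AA* = -d²/dx² + 1 + w² = B*B + 3/2` with `B = d/dx + w/√2`. For `ζ ⊥ w'` the function
`ψ = -(∫_{-∞}^x ζ w') / w'` solves `A*ψ = ζ`. Orthogonality lets one write the numerator as an
integral over `(-∞, x]` or over `(x, ∞)`, whichever tail `x` lies in, and Cauchy–Schwarz against
`∫_tail w'² ≤ w'(x)²` bounds `ψ² ≤ ‖ζ‖²`; with `ψ` bounded, the boundary terms of
`‖A*ψ‖² ≥ 3/2 ‖ψ‖²` on `[-R, R]` stay bounded, so `ψ ∈ L²`. Then `‖ζ‖² = ⟨Aζ, ψ⟩ ≤ ‖Aζ‖ ‖ψ‖` and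
`3/2 ‖ψ‖² ≤ ‖ζ‖²` give `⟨Lζ, ζ⟩ = ‖Aζ‖² ≥ 3/2 ‖ζ‖²`.
-/

open scoped ENNReal

lemma sq_integral_mul_le {α : Type*} [MeasurableSpace α] {μ : Measure α} {f g : α → ℝ}
    (hf : MemLp f 2 μ) (hg : MemLp g 2 μ) :
    (∫ x, f x * g x ∂μ) ^ 2 ≤ (∫ x, f x ^ 2 ∂μ) * ∫ x, g x ^ 2 ∂μ := by
  have inner_toLp {u v : α → ℝ} (hu : MemLp u 2 μ) (hv : MemLp v 2 μ) :
      inner ℝ (hu.toLp u) (hv.toLp v) = ∫ x, u x * v x ∂μ := by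
    rw [L2.inner_def]
    refine integral_congr_ae ?_
    filter_upwards [hu.coeFn_toLp, hv.coeFn_toLp] with x hux hvx
    simp [hux, hvx, mul_comm]
  have h := real_inner_mul_inner_self_le (hf.toLp f) (hg.toLp g)
  simp only [inner_toLp] at h
  simpa [sq] using h

lemma hasDerivAt_integral_Iic {g : ℝ → ℝ} (hg : Integrable g) (hc : Continuous g) (x : ℝ) :
    HasDerivAt (fun y => ∫ t in Iic y, g t) (g x) x := by
  have e : (fun y => ∫ t in Iic y, g t) = fun y => (∫ t in Iic 0, g t) + ∫ t in 0..y, g t := by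
    funext y
    rw [← intervalIntegral.integral_Iic_sub_Iic hg.integrableOn hg.integrableOn]
    ring
  rw [e]
  exact (intervalIntegral.integral_hasDerivAt_right hg.intervalIntegrable
    (hc.stronglyMeasurableAtFilter _ _) hc.continuousAt).const_add _

lemma hasDerivAt_w (x : ℝ) : HasDerivAt w ((1 - w x ^ 2) / √2) x := by
  set y := x / √2
  have htanh : HasDerivAt tanh (1 - tanh y ^ 2) y := by
    rw [show tanh = fun z => sinh z / cosh z from funext tanh_eq_sinh_div_cosh]
    refine ((hasDerivAt_sinh y).div (hasDerivAt_cosh y) (cosh_pos y).ne').congr_deriv ?_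
    have hc := (cosh_pos y).ne'
    field_simp
  exact (htanh.comp x ((hasDerivAt_id x).div_const √2)).congr_deriv (by simp [w, y, div_eq_mul_inv])

lemma deriv_w (x : ℝ) : deriv w x = (1 - w x ^ 2) / √2 := (hasDerivAt_w x).deriv

@[fun_prop]
lemma continuous_w : Continuous w :=
  continuous_iff_continuousAt.2 fun x => (hasDerivAt_w x).continuousAt

lemma w_sq_lt_one (x : ℝ) : w x ^ 2 < 1 := tanh_sq_lt_one _

lemma abs_w_le_one (x : ℝ) : |w x| ≤ 1 := (abs_tanh_lt_one _).le

lemma w_nonneg {x : ℝ} (hx : 0 ≤ x) : 0 ≤ w x := by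
  rw [w, tanh_eq_sinh_div_cosh]
  exact div_nonneg (sinh_nonneg_iff.2 (by positivity)) (cosh_pos _).le

lemma w_nonpos {x : ℝ} (hx : x ≤ 0) : w x ≤ 0 := by
  rw [w, tanh_eq_sinh_div_cosh]
  exact div_nonpos_of_nonpos_of_nonneg
    (sinh_nonpos_iff.2 (div_nonpos_of_nonpos_of_nonneg hx (by positivity))) (cosh_pos _).le

lemma deriv_w_pos (x : ℝ) : 0 < deriv w x := by
  rw [deriv_w]; exact div_pos (by linarith [w_sq_lt_one x]) (by positivity)

lemma hasDerivAt_deriv_w (x : ℝ) : HasDerivAt (deriv w) (-(√2 * w x * deriv w x)) x := by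
  rw [show deriv w = fun y => (1 - w y ^ 2) / √2 from funext deriv_w]
  refine ((((hasDerivAt_w x).pow 2).const_sub 1).div_const √2).congr_deriv ?_
  field_simp
  rw [Real.sq_sqrt (by norm_num : (0:ℝ) ≤ 2)]
  ring

@[fun_prop]
lemma continuous_deriv_w : Continuous (deriv w) :=
  continuous_iff_continuousAt.2 fun x => (hasDerivAt_deriv_w x).continuousAt

lemma abs_deriv_w_le_one (x : ℝ) : |deriv w x| ≤ 1 := by
  rw [abs_of_pos (deriv_w_pos x), deriv_w, div_le_one (by positivity)]
  nlinarith [sq_nonneg (w x), Real.one_lt_sqrt_two]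

lemma memLp_top_w : MemLp w ∞ volume :=
  memLp_top_of_bound continuous_w.aestronglyMeasurable 1 (ae_of_all _ fun x => abs_w_le_one x)

lemma intervalIntegral_deriv_w_sq (a b : ℝ) :
    ∫ t in a..b, deriv w t ^ 2 = (w b - w b ^ 3 / 3) / √2 - (w a - w a ^ 3 / 3) / √2 := by
  refine intervalIntegral.integral_eq_sub_of_hasDerivAt (f := fun t => (w t - w t ^ 3 / 3) / √2)
    (fun x _ => ?_)
    ((continuous_deriv_w.pow 2).intervalIntegrable _ _)
  refine (((hasDerivAt_w x).sub (((hasDerivAt_w x).pow 3).div_const 3)).div_const √2).congr_deriv ?_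
  rw [deriv_w]
  ring

lemma abs_sub_cube_div_three_le {s : ℝ} (hs : |s| ≤ 1) : |s - s ^ 3 / 3| ≤ 2 / 3 := by
  rw [abs_le] at *
  constructor <;> nlinarith [sq_nonneg (1 - s), sq_nonneg (1 + s)]

lemma memLp_deriv_w : MemLp (deriv w) 2 volume := by
  refine (memLp_two_iff_integrable_sq continuous_deriv_w.aestronglyMeasurable).2
    (integrable_of_intervalIntegral_norm_bounded (2 / √2)
      (fun _ => (continuous_deriv_w.pow 2).integrableOn_Ioc) tendsto_neg_atTop_atBot tendsto_id (Eventually.of_forall fun R => ?_))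
  simp only [norm_pow, Real.norm_eq_abs, sq_abs, id, intervalIntegral_deriv_w_sq]
  have h1 := abs_sub_cube_div_three_le (abs_w_le_one R)
  have h2 := abs_sub_cube_div_three_le (abs_w_le_one (-R))
  rw [← sub_div, div_le_div_iff_of_pos_right (by positivity)]
  linarith [le_abs_self (w R - w R ^ 3 / 3), neg_abs_le (w (-R) - w (-R) ^ 3 / 3)]

lemma two_thirds_sub_div_sqrt_two_le {s : ℝ} (hs0 : 0 ≤ s) :
    (2 / 3 - (s - s ^ 3 / 3)) / √2 ≤ ((1 - s ^ 2) / √2) ^ 2 := by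
  have h2 : √2 ^ 2 = 2 := Real.sq_sqrt (by norm_num)
  have h14 : (1.4 : ℝ) ≤ √2 := by nlinarith [Real.sqrt_nonneg 2]
  rw [div_pow, h2, div_le_div_iff₀ (by positivity) (by norm_num)]
  have : (2 / 3 - (s - s ^ 3 / 3)) = (1 - s) ^ 2 * (2 + s) / 3 := by ring
  rw [this]
  have : (1 - s ^ 2) ^ 2 = (1 - s) ^ 2 * (1 + s) ^ 2 := by ring
  rw [this]
  have hq : 0 ≤ (1 - s) ^ 2 := sq_nonneg _
  nlinarith [mul_nonneg hq hs0, mul_nonneg (mul_nonneg hq hs0) hs0,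
    mul_nonneg hq (sub_nonneg.2 h14)]

lemma integral_Ioi_deriv_w_sq_le {x : ℝ} (hx : 0 ≤ x) :
    ∫ t in Ioi x, deriv w t ^ 2 ≤ deriv w x ^ 2 := by
  refine le_of_tendsto' (intervalIntegral_tendsto_integral_Ioi x
    memLp_deriv_w.integrable_sq.integrableOn tendsto_id) fun R => ?_
  rw [id, intervalIntegral_deriv_w_sq, deriv_w]
  refine le_trans ?_ (two_thirds_sub_div_sqrt_two_le (w_nonneg hx))
  have := (abs_le.1 (abs_sub_cube_div_three_le (abs_w_le_one R))).2
  rw [← sub_div]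
  gcongr

lemma integral_Iic_deriv_w_sq_le {x : ℝ} (hx : x ≤ 0) :
    ∫ t in Iic x, deriv w t ^ 2 ≤ deriv w x ^ 2 := by
  refine le_of_tendsto' (intervalIntegral_tendsto_integral_Iic x
    memLp_deriv_w.integrable_sq.integrableOn tendsto_id) fun R => ?_
  rw [id, intervalIntegral_deriv_w_sq, deriv_w]
  have h := two_thirds_sub_div_sqrt_two_le (neg_nonneg.2 (w_nonpos hx))
  have := (abs_le.1 (abs_sub_cube_div_three_le (abs_w_le_one R))).1
  rw [neg_sq] at h
  rw [← sub_div]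
  refine le_trans (div_le_div_of_nonneg_right ?_ (Real.sqrt_nonneg 2)) h
  linarith [show (-w x) ^ 3 = -w x ^ 3 by ring]

lemma hasDerivAt_w_mul_sq {h : ℝ → ℝ} {h' x : ℝ} (hh : HasDerivAt h h' x) :
    HasDerivAt (fun y => w y * h y ^ 2) (deriv w x * h x ^ 2 + 2 * w x * h x * h') x := by
  refine ((hasDerivAt_w x).mul (hh.pow 2)).congr_deriv ?_
  simp only [deriv_w, Pi.pow_apply]
  ring

lemma integrable_deriv_w_mul_sq {h h' : ℝ → ℝ} (hL2 : MemLp h 2 volume) (h'L2 : MemLp h' 2 volume) :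
    Integrable fun x => deriv w x * h x ^ 2 + 2 * w x * h x * h' x := by
  refine (hL2.integrable_sq.bdd_mul continuous_deriv_w.aestronglyMeasurable
      (ae_of_all _ fun x => abs_deriv_w_le_one x)).add ?_
  simpa only [Pi.mul_apply, mul_assoc] using
    ((hL2.mul' (r := 2) memLp_top_w).integrable_mul h'L2).const_mul 2

lemma integral_deriv_w_mul_sq {h h' : ℝ → ℝ} (hh : ∀ x, HasDerivAt h (h' x) x)
    (hL2 : MemLp h 2 volume) (h'L2 : MemLp h' 2 volume) :
    ∫ x, (deriv w x * h x ^ 2 + 2 * w x * h x * h' x) = 0 :=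
  integral_eq_zero_of_hasDerivAt_of_integrable (fun x => hasDerivAt_w_mul_sq (hh x))
    (integrable_deriv_w_mul_sq hL2 h'L2)
    (hL2.integrable_sq.bdd_mul continuous_w.aestronglyMeasurable
      (ae_of_all _ fun x => abs_w_le_one x))

/-- Pointwise form of `‖A*ψ‖² = ‖Bψ‖² + 3/2 ‖ψ‖²`: for `P = ψ x`, `Z = (A*ψ) x` one has
`ψ' x = √2 W P - Z`, the bracket is `(w ψ²)' x` and the dropped square is `(Bψ x)²`. -/
lemma three_halves_mul_sq_le (W P Z : ℝ) :
    3 / 2 * P ^ 2 ≤ Z ^ 2 + 3 / √2 * ((1 - W ^ 2) / √2 * P ^ 2 + 2 * W * P * (√2 * W * P - Z)) := by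
  have h2 : √2 ^ 2 = 2 := Real.sq_sqrt (by norm_num)
  have key : Z ^ 2 + 3 / √2 * ((1 - W ^ 2) / √2 * P ^ 2 + 2 * W * P * (√2 * W * P - Z))
      - 3 / 2 * P ^ 2 = (3 / √2 * W * P - Z) ^ 2 := by
    field_simp
    linear_combination (9 * W ^ 2 * P ^ 2 - 3 * P ^ 2 + 3 * W ^ 2 * P ^ 2) * h2
  linarith [sq_nonneg (3 / √2 * W * P - Z)]

def adjointSolution (ζ : ℝ → ℝ) (x : ℝ) : ℝ := -(∫ t in Iic x, ζ t * deriv w t) / deriv w x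

section adjointSolution

variable {ζ : ℝ → ℝ}

lemma hasDerivAt_adjointSolution (hζc : Continuous ζ) (hζ : MemLp ζ 2 volume) (x : ℝ) :
    HasDerivAt (adjointSolution ζ) (√2 * w x * adjointSolution ζ x - ζ x) x := by
  have hF := hasDerivAt_integral_Iic (g := fun t => ζ t * deriv w t)
    (hζ.integrable_mul memLp_deriv_w) (hζc.mul continuous_deriv_w) x
  refine (hF.neg.div (hasDerivAt_deriv_w x) (deriv_w_pos x).ne').congr_deriv ?_
  have := (deriv_w_pos x).ne'
  simp only [adjointSolution, Pi.neg_apply]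
  field_simp
  ring

lemma continuous_adjointSolution (hζc : Continuous ζ) (hζ : MemLp ζ 2 volume) :
    Continuous (adjointSolution ζ) :=
  continuous_iff_continuousAt.2 fun x => (hasDerivAt_adjointSolution hζc hζ x).continuousAt

lemma adjointSolution_sq_le (hζ : MemLp ζ 2 volume) (horth : ∫ x, ζ x * deriv w x = 0) (x : ℝ) :
    adjointSolution ζ x ^ 2 ≤ ∫ t, ζ t ^ 2 := by
  suffices h : (∫ t in Iic x, ζ t * deriv w t) ^ 2 ≤ (∫ t, ζ t ^ 2) * deriv w x ^ 2 by
    rwa [adjointSolution, div_pow, neg_sq, div_le_iff₀ (pow_pos (deriv_w_pos x) 2)]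
  have hint : Integrable (fun t => ζ t * deriv w t) := hζ.integrable_mul memLp_deriv_w
  have tail_le {s : Set ℝ} (hs : ∫ t in s, deriv w t ^ 2 ≤ deriv w x ^ 2) :
      (∫ t in s, ζ t * deriv w t) ^ 2 ≤ (∫ t, ζ t ^ 2) * deriv w x ^ 2 :=
    (sq_integral_mul_le (hζ.restrict s) (memLp_deriv_w.restrict s)).trans
      (mul_le_mul (setIntegral_le_integral hζ.integrable_sq (ae_of_all _ fun t => sq_nonneg _))
        hs (integral_nonneg fun t => sq_nonneg _) (integral_nonneg fun t => sq_nonneg _))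
  rcases le_total x 0 with hx | hx
  · exact tail_le (integral_Iic_deriv_w_sq_le hx)
  · have hsplit :=
      intervalIntegral.integral_Iic_add_Ioi (b := x) hint.integrableOn hint.integrableOn
    rw [horth, add_eq_zero_iff_eq_neg] at hsplit
    rw [hsplit, neg_sq]
    exact tail_le (integral_Ioi_deriv_w_sq_le hx)

lemma three_halves_mul_intervalIntegral_sq_adjointSolution_le (hζc : Continuous ζ)
    (hζ : MemLp ζ 2 volume) (horth : ∫ x, ζ x * deriv w x = 0) {R : ℝ} (hR : 0 ≤ R) :
    3 / 2 * ∫ x in -R..R, adjointSolution ζ x ^ 2 ≤ (1 + 6 / √2) * ∫ t, ζ t ^ 2 := by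
  set ψ := adjointSolution ζ
  set N := ∫ t, ζ t ^ 2
  have hψc : Continuous ψ := continuous_adjointSolution hζc hζ
  set D := fun x => deriv w x * ψ x ^ 2 + 2 * w x * ψ x * (√2 * w x * ψ x - ζ x)
  have hζ2c : Continuous fun x => ζ x ^ 2 := hζc.pow 2
  have hDc : Continuous D := by fun_prop
  have hFTC : ∫ x in -R..R, D x = w R * ψ R ^ 2 - w (-R) * ψ (-R) ^ 2 :=
    intervalIntegral.integral_eq_sub_of_hasDerivAt
      (fun x _ => hasDerivAt_w_mul_sq (hasDerivAt_adjointSolution hζc hζ x))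
      (hDc.intervalIntegrable _ _)
  have hmono : ∫ x in -R..R, 3 / 2 * ψ x ^ 2 ≤ ∫ x in -R..R, (ζ x ^ 2 + 3 / √2 * D x) :=
    intervalIntegral.integral_mono_on (by linarith)
      ((hψc.pow 2).const_mul _ |>.intervalIntegrable _ _) (hζ2c.add (hDc.const_mul _) |>.intervalIntegrable _ _)
      fun x _ => by simpa only [D, deriv_w] using three_halves_mul_sq_le (w x) (ψ x) (ζ x)
  rw [intervalIntegral.integral_const_mul, intervalIntegral.integral_add
    (hζ2c.intervalIntegrable _ _) ((hDc.const_mul _).intervalIntegrable _ _),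
    intervalIntegral.integral_const_mul, hFTC] at hmono
  have hζR : ∫ x in -R..R, ζ x ^ 2 ≤ N := by
    rw [intervalIntegral.integral_of_le (by linarith)]
    exact setIntegral_le_integral hζ.integrable_sq (ae_of_all _ fun t => sq_nonneg _)
  have hboundary : w R * ψ R ^ 2 - w (-R) * ψ (-R) ^ 2 ≤ 2 * N := by
    have hR1 := abs_le.1 (abs_w_le_one R)
    have hR2 := abs_le.1 (abs_w_le_one (-R))
    nlinarith [adjointSolution_sq_le hζ horth R, adjointSolution_sq_le hζ horth (-R),
      sq_nonneg (ψ R), sq_nonneg (ψ (-R))]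
  have h6 : 3 / √2 * (w R * ψ R ^ 2 - w (-R) * ψ (-R) ^ 2) ≤ 3 / √2 * (2 * N) :=
    mul_le_mul_of_nonneg_left hboundary (by positivity)
  linarith [show (1 + 6 / √2) * N = N + 3 / √2 * (2 * N) by ring]

lemma memLp_adjointSolution (hζc : Continuous ζ) (hζ : MemLp ζ 2 volume)
    (horth : ∫ x, ζ x * deriv w x = 0) : MemLp (adjointSolution ζ) 2 volume := by
  have hψc := continuous_adjointSolution hζc hζ
  refine (memLp_two_iff_integrable_sq hψc.aestronglyMeasurable).2
    (integrable_of_intervalIntegral_norm_bounded (2 / 3 * ((1 + 6 / √2) * ∫ t, ζ t ^ 2))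
      (fun _ => (hψc.pow 2).integrableOn_Ioc) tendsto_neg_atTop_atBot tendsto_id
      ((eventually_ge_atTop 0).mono fun R hR => ?_))
  have := three_halves_mul_intervalIntegral_sq_adjointSolution_le hζc hζ horth hR
  simp only [norm_pow, Real.norm_eq_abs, sq_abs, id]
  linarith

lemma three_halves_mul_integral_sq_adjointSolution_le (hζc : Continuous ζ)
    (hζ : MemLp ζ 2 volume) (horth : ∫ x, ζ x * deriv w x = 0) :
    3 / 2 * ∫ x, adjointSolution ζ x ^ 2 ≤ ∫ x, ζ x ^ 2 := by
  set ψ := adjointSolution ζ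
  have hψ : MemLp ψ 2 volume := memLp_adjointSolution hζc hζ horth
  have hψ' : MemLp (fun x => √2 * w x * ψ x - ζ x) 2 volume := by
    convert ((hψ.mul' (r := 2) memLp_top_w).const_mul √2).sub hζ using 1
    funext x
    simp only [Pi.sub_apply]
    ring
  have hD := integrable_deriv_w_mul_sq hψ hψ'
  calc 3 / 2 * ∫ x, ψ x ^ 2
      = ∫ x, 3 / 2 * ψ x ^ 2 := (integral_const_mul _ _).symm
    _ ≤ ∫ x, (ζ x ^ 2 + 3 / √2 * (deriv w x * ψ x ^ 2 + 2 * w x * ψ x * (√2 * w x * ψ x - ζ x))) :=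
        integral_mono (hψ.integrable_sq.const_mul _) (hζ.integrable_sq.add (hD.const_mul _))
          fun x => by simpa only [deriv_w] using three_halves_mul_sq_le (w x) (ψ x) (ζ x)
    _ = ∫ x, ζ x ^ 2 := by
        rw [integral_add hζ.integrable_sq (hD.const_mul _), integral_const_mul,
          integral_deriv_w_mul_sq (hasDerivAt_adjointSolution hζc hζ) hψ hψ', mul_zero, add_zero]

end adjointSolution

section quadraticForm

variable {ζ : ℝ → ℝ}

lemma memLp_deriv_add_w_mul (hζ : MemLp ζ 2 volume) (hζ' : MemLp (deriv ζ) 2 volume) :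
    MemLp (fun x => deriv ζ x + √2 * w x * ζ x) 2 volume := by
  convert hζ'.add ((hζ.mul' (r := 2) memLp_top_w).const_mul √2) using 1
  funext x
  simp only [Pi.add_apply]
  ring

lemma integral_deriv_sq_sub_fp_mul_sq_eq (hζd : Differentiable ℝ ζ) (hζ : MemLp ζ 2 volume)
    (hζ' : MemLp (deriv ζ) 2 volume) :
    ∫ x, deriv ζ x ^ 2 - fp (w x) * ζ x ^ 2 = ∫ x, (deriv ζ x + √2 * w x * ζ x) ^ 2 := by
  have hQ : Integrable fun x => deriv ζ x ^ 2 - fp (w x) * ζ x ^ 2 := by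
    refine hζ'.integrable_sq.sub (hζ.integrable_sq.bdd_mul (c := 2)
      (by unfold fp; fun_prop) (ae_of_all _ fun x => ?_))
    rw [fp, Real.norm_eq_abs, abs_le]
    constructor <;> nlinarith [w_sq_lt_one x, sq_nonneg (w x)]
  have hD := integrable_deriv_w_mul_sq hζ hζ'
  calc ∫ x, deriv ζ x ^ 2 - fp (w x) * ζ x ^ 2
      = (∫ x, deriv ζ x ^ 2 - fp (w x) * ζ x ^ 2) +
          √2 * ∫ x, (deriv w x * ζ x ^ 2 + 2 * w x * ζ x * deriv ζ x) := by
        rw [integral_deriv_w_mul_sq (fun x => (hζd x).hasDerivAt) hζ hζ', mul_zero, add_zero]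
    _ = ∫ x, (deriv ζ x + √2 * w x * ζ x) ^ 2 := by
        rw [← integral_const_mul, ← integral_add hQ (hD.const_mul _)]
        refine integral_congr_ae (ae_of_all _ fun x => ?_)
        have h2 : √2 ^ 2 = 2 := Real.sq_sqrt (by norm_num)
        simp only [fp, deriv_w]
        field_simp
        linear_combination (-(w x ^ 2 * ζ x ^ 2)) * h2

lemma integral_sq_eq_integral_mul_adjointSolution (hζd : Differentiable ℝ ζ)
    (hζ : MemLp ζ 2 volume) (hζ' : MemLp (deriv ζ) 2 volume) (horth : ∫ x, ζ x * deriv w x = 0) :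
    ∫ x, ζ x ^ 2 = ∫ x, (deriv ζ x + √2 * w x * ζ x) * adjointSolution ζ x := by
  have hψ := memLp_adjointSolution hζd.continuous hζ horth
  have hAψ : Integrable fun x => (deriv ζ x + √2 * w x * ζ x) * adjointSolution ζ x :=
    (memLp_deriv_add_w_mul hζ hζ').integrable_mul hψ
  have h0 := integral_eq_zero_of_hasDerivAt_of_integrable
    (f := fun x => ζ x * adjointSolution ζ x)
    (f' := fun x => (deriv ζ x + √2 * w x * ζ x) * adjointSolution ζ x - ζ x ^ 2)
    (fun x => ((hζd x).hasDerivAt.mul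
      (hasDerivAt_adjointSolution hζd.continuous hζ x)).congr_deriv (by ring))
    (hAψ.sub hζ.integrable_sq) (hζ.integrable_mul hψ)
  rw [integral_sub hAψ hζ.integrable_sq, sub_eq_zero] at h0
  exact h0.symm

end quadraticForm

/-- **inequality (3.26).** Spectral gap inequality: there is `c > 0` such that
for every `ζ ∈ H¹(ℝ) ∩ L²(ℝ)` orthogonal to `w'`,
`∫ |ζ'|² - f'(w)|ζ|² ≥ c ∫ |ζ|²`. -/
theorem stmt18 :
    ∃ c > (0 : ℝ), ∀ ζ : ℝ → ℝ,
      Differentiable ℝ ζ →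
      MemLp ζ 2 volume →
      MemLp (deriv ζ) 2 volume →
      (∫ x : ℝ, ζ x * deriv w x) = 0 →
      c * ∫ x : ℝ, ζ x ^ 2 ≤ ∫ x : ℝ, deriv ζ x ^ 2 - fp (w x) * ζ x ^ 2 := by
  refine ⟨3 / 2, by norm_num, fun ζ hζd hζ hζ' horth => ?_⟩
  have hψ_le := three_halves_mul_integral_sq_adjointSolution_le hζd.continuous hζ horth
  have hCS := sq_integral_mul_le (memLp_deriv_add_w_mul hζ hζ')
    (memLp_adjointSolution hζd.continuous hζ horth)
  rw [← integral_sq_eq_integral_mul_adjointSolution hζd hζ hζ' horth] at hCS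
  rw [integral_deriv_sq_sub_fp_mul_sq_eq hζd hζ hζ']
  have hN : 0 ≤ ∫ x, ζ x ^ 2 := integral_nonneg fun x => sq_nonneg _
  have hQ : 0 ≤ ∫ x, (deriv ζ x + √2 * w x * ζ x) ^ 2 := integral_nonneg fun x => sq_nonneg _
  nlinarith [mul_le_mul_of_nonneg_left hψ_le hQ]
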